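/- arXiv:1010.5481 — 2 statements merged into one kernel-verified Lean document; each statement's English description precedes it below -/
import Mathlib

section
/- Fix a natural number k. There exists a finite family Z of finite simple bipartite graphs such that for every finite simple bipartite (2-colorable) graph G with maximum degree at most k, the degree multiset of G equals the sum of the degree multisets of the members of some finite multiset of graphs drawn from Z. Consequently, every degree sequence of a finite bipartite graph with all degrees at most k is realized by a disjoint union of bipartite graphs from the fixed finite set Z. -/
open scoped Classical

/-- The degree multiset of a finite simple graph: the multiset of vertex
degrees counted with multiplicity. -/
noncomputable def degMultiset {V : Type} [Fintype V] (G : SimpleGraph V) : Multiset ℕ :=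
  Finset.univ.val.map fun v => G.degree v

/-!
Take for `Z` all bipartite graphs on at most `2 (k + 1) ^ 6` vertices and induct on the number of
vertices. A larger bipartite graph `G` with degrees at most `k` is replaced by a bipartite graph
with the same degrees that falls apart into two smaller pieces. An isolated vertex splits off
directly. Otherwise both colour classes are large, so some degree `d` occurs often in one class
and some degree `e` in the other; greedily pick `e` vertices `U` of degree `d` and `d` vertices `W`
of degree `e`, pairwise at distance more than `3`. Cut `U ∪ W` off, join `U` completely to `W`
(a `K_{e,d}` in which every vertex keeps its degree), and pair the `d e` former neighbours of `U`
with the `e d` former neighbours of `W` by a perfect matching. The distance condition makes each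
former neighbour lose exactly one edge and gain exactly one new edge, and the new edges respect
the colouring.
-/

open Finset SimpleGraph

section DegMultiset

variable {V : Type} [Fintype V]

lemma degMultiset_congr {G H : SimpleGraph V} (h : ∀ v, G.degree v = H.degree v) :
    degMultiset G = degMultiset H := by
  simp only [degMultiset, h]

lemma SimpleGraph.Iso.degMultiset_eq {V' : Type} [Fintype V'] {G : SimpleGraph V}
    {G' : SimpleGraph V'} (f : G ≃g G') : degMultiset G' = degMultiset G := by
  rw [degMultiset, ← Multiset.map_univ_val_equiv f.toEquiv, Multiset.map_map]
  exact Multiset.map_congr rfl fun v _ => f.degree_eq v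

lemma degMultiset_induce {G : SimpleGraph V} {s : Set V} [Fintype s]
    (hs : ∀ v ∈ s, G.neighborSet v ⊆ s) :
    degMultiset (G.induce s) = ({v | v ∈ s} : Finset V).val.map fun v => G.degree v := by
  rw [degMultiset, ← univ_val_map_subtype_restrict]
  exact Multiset.map_congr rfl fun v _ => by
    rw [Subtype.restrict_apply]; convert degree_induce_of_neighborSet_subset (hs v v.2)

lemma degMultiset_eq_add_induce_compl {G : SimpleGraph V} {s : Set V}
    (hs : ∀ x y, G.Adj x y → (x ∈ s ↔ y ∈ s)) :
    degMultiset G = degMultiset (G.induce s) + degMultiset (G.induce sᶜ) := by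
  rw [degMultiset_induce fun v hv w hw => (hs v w hw).1 hv,
    degMultiset_induce (s := sᶜ) fun v hv w hw => mt (hs v w hw).2 hv, ← Multiset.map_add,
    filter_val, filter_val]
  simp only [Set.mem_compl_iff, Multiset.filter_add_not, degMultiset]

end DegMultiset

def UnionRealizable (Z : List (Σ n : ℕ, SimpleGraph (Fin n))) (D : Multiset ℕ) : Prop :=
  ∃ m : Multiset (Σ n : ℕ, SimpleGraph (Fin n)),
    (∀ p ∈ m, p ∈ Z) ∧ D = (m.map fun p => degMultiset p.2).sum

namespace UnionRealizable

variable {Z : List (Σ n : ℕ, SimpleGraph (Fin n))}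

lemma add {D₁ D₂ : Multiset ℕ} (h₁ : UnionRealizable Z D₁)
    (h₂ : UnionRealizable Z D₂) : UnionRealizable Z (D₁ + D₂) := by
  obtain ⟨m₁, hm₁, rfl⟩ := h₁
  obtain ⟨m₂, hm₂, rfl⟩ := h₂
  refine ⟨m₁ + m₂, fun p hp => ?_, by rw [Multiset.map_add, Multiset.sum_add]⟩
  exact (Multiset.mem_add.1 hp).elim (hm₁ p) (hm₂ p)

lemma of_mem {V : Type} [Fintype V] (G : SimpleGraph V)
    (hG : ⟨Fintype.card V, G.overFin rfl⟩ ∈ Z) : UnionRealizable Z (degMultiset G) :=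
  ⟨{⟨_, G.overFin rfl⟩}, by simpa using hG, by simp [(G.overFinIso rfl).degMultiset_eq]⟩

end UnionRealizable

noncomputable def bipartiteGraphsUpTo (N : ℕ) : List (Σ n : ℕ, SimpleGraph (Fin n)) :=
  ((range (N + 1)).sigma fun n => {H : SimpleGraph (Fin n) | H.Colorable 2}).toList

lemma mem_bipartiteGraphsUpTo {N : ℕ} {p : Σ n : ℕ, SimpleGraph (Fin n)} :
    p ∈ bipartiteGraphsUpTo N ↔ p.1 ≤ N ∧ p.2.Colorable 2 := by
  simp [bipartiteGraphsUpTo]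

namespace SimpleGraph

variable {V : Type*} {G : SimpleGraph V}

def power (G : SimpleGraph V) (n : ℕ) : SimpleGraph V where
  Adj x y := x ≠ y ∧ ∃ p : G.Walk x y, p.length ≤ n
  symm := ⟨fun _ _ ⟨hne, p, hp⟩ => ⟨hne.symm, p.reverse, by rwa [Walk.length_reverse]⟩⟩
  loopless := ⟨fun _ h => h.1 rfl⟩

lemma IsIndepSet.eq_of_walk {n : ℕ} {S : Set V} (hS : (G.power n).IsIndepSet S) {s t : V}
    (hs : s ∈ S) (ht : t ∈ S) (p : G.Walk s t) (hp : p.length ≤ n) : s = t := by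
  by_contra hne
  exact hS hs ht hne ⟨hne, p, hp⟩

lemma IsBipartiteWith.sup {G₁ G₂ : SimpleGraph V} {s t : Set V}
    (h₁ : G₁.IsBipartiteWith s t) (h₂ : G₂.IsBipartiteWith s t) :
    (G₁ ⊔ G₂).IsBipartiteWith s t :=
  ⟨h₁.disjoint, fun _ _ h => h.elim (fun h => h₁.mem_of_adj h) fun h => h₂.mem_of_adj h⟩

lemma IsBipartiteWith.mono_left {H : SimpleGraph V} {s t : Set V} (hle : H ≤ G)
    (h : G.IsBipartiteWith s t) : H.IsBipartiteWith s t :=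
  ⟨h.disjoint, fun _ _ hadj => h.mem_of_adj (hle hadj)⟩

lemma IsBipartiteWith.of_subset {s t s' t' : Set V} (h : G.IsBipartiteWith s t) (hs : s ⊆ s')
    (ht : t ⊆ t') (hd : Disjoint s' t') : G.IsBipartiteWith s' t' :=
  ⟨hd, fun _ _ hadj =>
    (h.mem_of_adj hadj).imp (And.imp (@hs _) (@ht _)) (And.imp (@ht _) (@hs _))⟩

lemma degree_sup_of_disjoint {G₁ G₂ : SimpleGraph V} (h : Disjoint G₁ G₂) (v : V)
    [Fintype ((G₁ ⊔ G₂).neighborSet v)] [Fintype (G₁.neighborSet v)]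
    [Fintype (G₂.neighborSet v)] :
    (G₁ ⊔ G₂).degree v = G₁.degree v + G₂.degree v := by
  simp only [← card_neighborFinset_eq_degree, neighborFinset_sup_of_disjoint v h, card_disjUnion]

def matchingGraph {s t : Finset V} (φ : s ≃ t) : SimpleGraph V :=
  fromRel fun x y => ∃ hx : x ∈ s, (φ ⟨x, hx⟩ : V) = y

lemma matchingGraph_adj {s t : Finset V} {φ : s ≃ t} {x y : V} :
    (matchingGraph φ).Adj x y ↔
      x ≠ y ∧
        ((∃ hx : x ∈ s, (φ ⟨x, hx⟩ : V) = y) ∨ ∃ hy : y ∈ s, (φ ⟨y, hy⟩ : V) = x) :=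
  fromRel_adj ..

lemma mem_union_of_matchingGraph_adj {s t : Finset V} {φ : s ≃ t} {x y : V}
    (h : (matchingGraph φ).Adj x y) : x ∈ s ∪ t := by
  obtain ⟨-, ⟨hx, -⟩ | ⟨hy, rfl⟩⟩ := matchingGraph_adj.1 h
  · exact mem_union_left _ hx
  · exact mem_union_right _ (φ ⟨y, hy⟩).2

lemma isBipartiteWith_matchingGraph {s t : Finset V} (hst : Disjoint s t) (φ : s ≃ t) :
    (matchingGraph φ).IsBipartiteWith ↑s ↑t := by
  refine ⟨disjoint_coe.2 hst, fun x y hxy => ?_⟩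
  obtain ⟨-, ⟨hx, rfl⟩ | ⟨hy, rfl⟩⟩ := matchingGraph_adj.1 hxy
  · exact Or.inl ⟨hx, (φ ⟨x, hx⟩).2⟩
  · exact Or.inr ⟨(φ ⟨y, hy⟩).2, hy⟩

section Distance

variable {n : ℕ} {S : Set V} {s t x : V}

lemma IsIndepSet.notMem_of_adj (hn : 1 ≤ n) (hS : (G.power n).IsIndepSet S) (hs : s ∈ S)
    (h : G.Adj s x) : x ∉ S := fun hx =>
  G.ne_of_adj h (hS.eq_of_walk hs hx h.toWalk (by rw [h.length_toWalk]; exact hn))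

lemma IsIndepSet.eq_of_adj_of_adj (hn : 2 ≤ n) (hS : (G.power n).IsIndepSet S) (hs : s ∈ S)
    (ht : t ∈ S) (h₁ : G.Adj s x) (h₂ : G.Adj t x) : s = t :=
  hS.eq_of_walk hs ht (.cons h₁ (.cons h₂.symm .nil)) (by simpa using hn)

lemma IsIndepSet.eq_of_adj_of_adj_of_adj (hn : 3 ≤ n) (hS : (G.power n).IsIndepSet S) {y : V}
    (hs : s ∈ S) (ht : t ∈ S) (h₁ : G.Adj s x) (h₂ : G.Adj x y) (h₃ : G.Adj y t) :
    s = t :=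
  hS.eq_of_walk hs ht (.cons h₁ (.cons h₂ (.cons h₃ .nil))) (by simpa using hn)

end Distance

variable [Fintype V]

noncomputable def walkBall (G : SimpleGraph V) (v : V) (n : ℕ) : Finset V :=
  {w | ∃ p : G.Walk v w, p.length ≤ n}

lemma walkBall_succ_subset (v : V) (n : ℕ) :
    G.walkBall v (n + 1) ⊆ insert v ((G.neighborFinset v).biUnion fun u => G.walkBall u n) := by
  intro w hw
  obtain ⟨p, hp⟩ := (mem_filter.1 hw).2
  cases p with
  | nil => exact mem_insert_self _ _
  | cons h q =>
    rw [Walk.length_cons] at hp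
    exact mem_insert_of_mem (mem_biUnion.2
      ⟨_, (mem_neighborFinset _ _ _).2 h, mem_filter.2 ⟨mem_univ _, q, by omega⟩⟩)

lemma card_walkBall_le {k : ℕ} (hdeg : ∀ v, G.degree v ≤ k) (v : V) (n : ℕ) :
    #(G.walkBall v n) ≤ (k + 1) ^ n := by
  induction n generalizing v with
  | zero =>
    refine (card_le_card fun w hw => ?_).trans (card_singleton v).le
    obtain ⟨p, hp⟩ := (mem_filter.1 hw).2
    cases p with
    | nil => exact mem_singleton_self v
    | cons => simp at hp
  | succ n ih =>
    calc #(G.walkBall v (n + 1))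
        ≤ #((G.neighborFinset v).biUnion fun u => G.walkBall u n) + 1 :=
          (card_le_card (walkBall_succ_subset v n)).trans (card_insert_le _ _)
      _ ≤ k * (k + 1) ^ n + 1 := by
          gcongr
          refine card_biUnion_le.trans ((sum_le_card_nsmul _ _ _ fun u _ => ih u).trans ?_)
          rw [smul_eq_mul, card_neighborFinset_eq_degree]
          exact Nat.mul_le_mul_right _ (hdeg v)
      _ ≤ (k + 1) ^ (n + 1) := by
          rw [pow_succ']
          nlinarith [Nat.one_le_pow n (k + 1) k.succ_pos]

lemma degree_power_lt {k : ℕ} (hdeg : ∀ v, G.degree v ≤ k) (v : V) (n : ℕ) :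
    (G.power n).degree v < (k + 1) ^ n := by
  have hsub : (G.power n).neighborFinset v ⊆ (G.walkBall v n).erase v := fun w hw => by
    obtain ⟨hne, p, hp⟩ := (mem_neighborFinset _ _ _).1 hw
    exact mem_erase.2 ⟨hne.symm, mem_filter.2 ⟨mem_univ _, p, hp⟩⟩
  have hv : v ∈ G.walkBall v n := mem_filter.2 ⟨mem_univ _, Walk.nil, by simp⟩
  rw [← card_neighborFinset_eq_degree]
  calc #((G.power n).neighborFinset v) ≤ #((G.walkBall v n).erase v) := card_le_card hsub
    _ < #(G.walkBall v n) := card_erase_lt_of_mem hv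
    _ ≤ (k + 1) ^ n := card_walkBall_le hdeg v n

/-- Greedy choice: each new vertex only has to avoid the closed neighbourhoods of those already
chosen, which cover at most `Δ + 1` vertices each. -/
theorem exists_isIndepSet_union {H : SimpleGraph V} {Δ : ℕ} (hdeg : ∀ v, H.degree v ≤ Δ)
    (P : Finset V) (m : ℕ) (A : Finset V) (hA : H.IsIndepSet A)
    (hP : (#A + m) * (Δ + 1) ≤ #P) :
    ∃ U ⊆ P, #U = m ∧ Disjoint A U ∧ H.IsIndepSet ↑(A ∪ U) := by
  induction m generalizing A with
  | zero => exact ⟨∅, empty_subset _, rfl, disjoint_empty_right _, by simpa using hA⟩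
  | succ m ih =>
    set T := A.biUnion fun a => insert a (H.neighborFinset a)
    have hclosed : ∀ a, #(insert a (H.neighborFinset a)) ≤ Δ + 1 := fun a =>
      (card_insert_le _ _).trans (Nat.succ_le_succ ((card_neighborFinset_eq_degree H a).trans_le
        (hdeg a)))
    have hT : #T < #P :=
      calc #T ≤ #A * (Δ + 1) :=
            card_biUnion_le.trans (sum_le_card_nsmul _ _ _ fun a _ => hclosed a)
        _ < (#A + (m + 1)) * (Δ + 1) := by nlinarith
        _ ≤ #P := hP
    obtain ⟨x, hxP, hxT⟩ := exists_mem_notMem_of_card_lt_card hT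
    have hxA : x ∉ A := fun hx => hxT (mem_biUnion.2 ⟨x, hx, mem_insert_self _ _⟩)
    have hxA' : H.IsIndepSet ↑(insert x A) := by
      rw [coe_insert]
      refine hA.insert fun a ha _ => ⟨fun h => hxT ?_, fun h => hxT ?_⟩
      · exact mem_biUnion.2 ⟨a, ha, mem_insert_of_mem ((mem_neighborFinset _ _ _).2 h.symm)⟩
      · exact mem_biUnion.2 ⟨a, ha, mem_insert_of_mem ((mem_neighborFinset _ _ _).2 h)⟩
    obtain ⟨U, hUP, hU, hdisj, hind⟩ :=
      ih (insert x A) hxA' (by rw [card_insert_of_notMem hxA]; linarith)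
    have hxU : x ∉ U := Finset.disjoint_left.1 hdisj (mem_insert_self x A)
    refine ⟨insert x U, insert_subset hxP hUP, by rw [card_insert_of_notMem hxU, hU], ?_, ?_⟩
    · exact disjoint_insert_right.2 ⟨hxA, (disjoint_insert_left.1 hdisj).2⟩
    · rwa [union_insert, ← insert_union]

lemma exists_isBipartiteWith_compl (h : G.Colorable 2) :
    ∃ s : Finset V, G.IsBipartiteWith ↑s ↑sᶜ := by
  obtain ⟨c⟩ := h
  refine ⟨({v | c v = 0} : Finset V), ⟨by rw [coe_compl]; exact disjoint_compl_right,
    fun v w hvw => ?_⟩⟩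
  have := c.valid hvw
  simp only [coe_compl, coe_filter, mem_univ, true_and, Set.mem_compl_iff, Set.mem_ofPred_eq]
  omega

lemma card_le_mul_card_of_isBipartiteWith {s t : Finset V} {k : ℕ}
    (h : G.IsBipartiteWith ↑s ↑t) (hs : ∀ v ∈ s, 0 < G.degree v)
    (ht : ∀ v ∈ t, G.degree v ≤ k) : #s ≤ k * #t :=
  calc #s = ∑ _ ∈ s, 1 := card_eq_sum_ones s
    _ ≤ ∑ v ∈ s, G.degree v := sum_le_sum hs
    _ = ∑ v ∈ t, G.degree v := isBipartiteWith_sum_degrees_eq h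
    _ ≤ #t * k := sum_le_card_nsmul _ _ _ ht
    _ = k * #t := mul_comm _ _

lemma degree_matchingGraph {s t : Finset V} (hst : Disjoint s t) (φ : s ≃ t) (v : V) :
    (matchingGraph φ).degree v = if v ∈ s ∪ t then 1 else 0 := by
  have hφ : ∀ x (hx : x ∈ s), (φ ⟨x, hx⟩ : V) ∉ s := fun x hx h =>
    Finset.disjoint_left.1 hst h (φ ⟨x, hx⟩).2
  rw [← card_neighborFinset_eq_degree]
  split_ifs with hv
  · rw [card_eq_one]
    rcases mem_union.1 hv with hvs | hvt
    · refine ⟨φ ⟨v, hvs⟩, ?_⟩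
      ext w
      simp only [mem_neighborFinset, matchingGraph_adj, mem_singleton]
      constructor
      · rintro ⟨-, ⟨_, rfl⟩ | ⟨hw, rfl⟩⟩
        · rfl
        · exact absurd hvs (hφ w hw)
      · rintro rfl
        exact ⟨fun h => hφ v hvs (h ▸ hvs), Or.inl ⟨hvs, rfl⟩⟩
    · refine ⟨φ.symm ⟨v, hvt⟩, ?_⟩
      ext w
      simp only [mem_neighborFinset, matchingGraph_adj, mem_singleton]
      constructor
      · rintro ⟨-, ⟨hv', -⟩ | ⟨hw, rfl⟩⟩
        · exact absurd hvt (Finset.disjoint_left.1 hst hv')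
        · simp
      · rintro rfl
        exact ⟨fun h => Finset.disjoint_left.1 hst (h ▸ (φ.symm ⟨v, hvt⟩).2) hvt,
          Or.inr ⟨(φ.symm ⟨v, hvt⟩).2, by simp⟩⟩
  · rw [card_eq_zero, eq_empty_iff_forall_notMem]
    rintro w hw
    simp only [mem_neighborFinset, matchingGraph_adj] at hw
    obtain ⟨-, ⟨hv', -⟩ | ⟨hw, rfl⟩⟩ := hw
    · exact hv (mem_union_left _ hv')
    · exact hv (mem_union_right _ (φ ⟨w, hw⟩).2)

lemma degree_top_between {U W : Finset V} (hUW : Disjoint U W) (v : V) :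
    ((⊤ : SimpleGraph V).between ↑U ↑W).degree v =
      if v ∈ U then #W else if v ∈ W then #U else 0 := by
  rw [← card_neighborFinset_eq_degree]
  have hWU := Finset.disjoint_left.1 hUW
  have hUW' := Finset.disjoint_right.1 hUW
  split_ifs with hvU hvW
  · congr 1
    ext w
    simp only [mem_neighborFinset, between_adj, top_adj, mem_coe]
    exact ⟨by tauto, fun hw => ⟨fun h => hWU hvU (h ▸ hw), Or.inl ⟨hvU, hw⟩⟩⟩
  · congr 1
    ext w
    simp only [mem_neighborFinset, between_adj, top_adj, mem_coe]
    exact ⟨by tauto, fun hw => ⟨fun h => hUW' hvW (h ▸ hw), Or.inr ⟨hvW, hw⟩⟩⟩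
  · refine card_eq_zero.2 (eq_empty_iff_forall_notMem.2 fun w hw => ?_)
    simp only [mem_neighborFinset, between_adj, mem_coe] at hw
    tauto

lemma degree_between_compl_of_mem {S : Finset V} {v : V} (hv : v ∈ S) :
    (G.between (↑S)ᶜ (↑S)ᶜ).degree v = 0 := by
  rw [← card_neighborFinset_eq_degree, card_eq_zero, eq_empty_iff_forall_notMem]
  intro w hw
  simp only [mem_neighborFinset, between_adj, Set.mem_compl_iff, mem_coe] at hw
  tauto

lemma degree_between_compl_of_notMem {S : Finset V} {v : V} (hv : v ∉ S) :
    (G.between (↑S)ᶜ (↑S)ᶜ).degree v = #(G.neighborFinset v \ S) := by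
  rw [← card_neighborFinset_eq_degree]
  congr 1
  ext w
  simp only [mem_neighborFinset, between_adj, Set.mem_compl_iff, mem_coe, mem_sdiff]
  tauto

section Rewiring

variable {n : ℕ}

lemma IsIndepSet.card_neighborFinset_inter (hn : 2 ≤ n) {S : Finset V}
    (hS : (G.power n).IsIndepSet ↑S) (v : V) :
    #(G.neighborFinset v ∩ S) = if v ∈ S.biUnion (G.neighborFinset ·) then 1 else 0 := by
  split_ifs with hv
  · obtain ⟨s, hs, hsv⟩ := mem_biUnion.1 hv
    rw [mem_neighborFinset] at hsv
    refine card_eq_one.2 ⟨s, eq_singleton_iff_unique_mem.2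
      ⟨mem_inter.2 ⟨(mem_neighborFinset ..).2 hsv.symm, hs⟩, fun t ht => ?_⟩⟩
    obtain ⟨htv, htS⟩ := mem_inter.1 ht
    exact hS.eq_of_adj_of_adj hn htS hs ((mem_neighborFinset ..).1 htv).symm hsv
  · refine card_eq_zero.2 (eq_empty_iff_forall_notMem.2 fun s hs => hv ?_)
    obtain ⟨hsv, hsS⟩ := mem_inter.1 hs
    exact mem_biUnion.2 ⟨s, hsS, (G.mem_neighborFinset ..).2 (G.adj_symm (by simpa using hsv))⟩

lemma IsIndepSet.card_biUnion_neighborFinset (hn : 2 ≤ n) {S : Finset V}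
    (hS : (G.power n).IsIndepSet ↑S) :
    #(S.biUnion (G.neighborFinset ·)) = ∑ s ∈ S, G.degree s := by
  rw [card_biUnion fun s hs t ht hst => Finset.disjoint_left.2 fun x hxs hxt =>
    hst (hS.eq_of_adj_of_adj hn hs ht ((mem_neighborFinset ..).1 hxs)
      ((mem_neighborFinset ..).1 hxt))]
  simp_rw [card_neighborFinset_eq_degree]

lemma IsIndepSet.disjoint_biUnion_neighborFinset (hn : 1 ≤ n) {S : Finset V}
    (hS : (G.power n).IsIndepSet ↑S) : Disjoint (S.biUnion (G.neighborFinset ·)) S :=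
  Finset.disjoint_left.2 fun _ hx => by
    obtain ⟨s, hs, hsx⟩ := mem_biUnion.1 hx
    exact hS.notMem_of_adj hn hs ((mem_neighborFinset ..).1 hsx)

variable {U W : Finset V}

lemma disjoint_biUnion_neighborFinset_of_isIndepSet (hn : 2 ≤ n) (hUW : Disjoint U W)
    (hS : (G.power n).IsIndepSet ↑(U ∪ W)) :
    Disjoint (U.biUnion (G.neighborFinset ·)) (W.biUnion (G.neighborFinset ·)) :=
  Finset.disjoint_left.2 fun _ hxU hxW => by
    obtain ⟨u, hu, hux⟩ := mem_biUnion.1 hxU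
    obtain ⟨w, hw, hwx⟩ := mem_biUnion.1 hxW
    have := hS.eq_of_adj_of_adj hn (mem_union_left _ hu) (mem_union_right _ hw)
      ((mem_neighborFinset ..).1 hux) ((mem_neighborFinset ..).1 hwx)
    exact Finset.disjoint_left.1 hUW hu (this ▸ hw)

lemma not_adj_of_mem_biUnion_neighborFinset (hn : 3 ≤ n) (hUW : Disjoint U W)
    (hS : (G.power n).IsIndepSet ↑(U ∪ W)) {x y : V}
    (hx : x ∈ U.biUnion (G.neighborFinset ·)) (hy : y ∈ W.biUnion (G.neighborFinset ·)) :
    ¬G.Adj x y := fun hxy => by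
  obtain ⟨u, hu, hux⟩ := mem_biUnion.1 hx
  obtain ⟨w, hw, hwy⟩ := mem_biUnion.1 hy
  have := hS.eq_of_adj_of_adj_of_adj hn (mem_union_left _ hu) (mem_union_right _ hw)
    ((mem_neighborFinset ..).1 hux) hxy ((mem_neighborFinset ..).1 hwy).symm
  exact Finset.disjoint_left.1 hUW hu (this ▸ hw)

noncomputable def rewiring (G : SimpleGraph V) (U W : Finset V)
    (φ : U.biUnion (G.neighborFinset ·) ≃ W.biUnion (G.neighborFinset ·)) : SimpleGraph V :=
  G.between (↑(U ∪ W))ᶜ (↑(U ∪ W))ᶜ ⊔ (⊤ : SimpleGraph V).between ↑U ↑W ⊔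
    matchingGraph φ

variable (φ : U.biUnion (G.neighborFinset ·) ≃ W.biUnion (G.neighborFinset ·))

lemma mem_iff_of_rewiring_adj (hn : 1 ≤ n) (hS : (G.power n).IsIndepSet ↑(U ∪ W)) {x y : V}
    (h : (G.rewiring U W φ).Adj x y) : x ∈ U ∪ W ↔ y ∈ U ∪ W := by
  have hN := hS.disjoint_biUnion_neighborFinset hn
  rw [union_biUnion] at hN
  rcases h with (h | h) | h
  · simp only [between_adj, Set.mem_compl_iff, mem_coe] at h
    tauto
  · simp only [between_adj, mem_coe] at h
    rcases h.2 with ⟨hx, hy⟩ | ⟨hx, hy⟩ <;> simp [hx, hy]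
  · exact iff_of_false (Finset.disjoint_left.1 hN (mem_union_of_matchingGraph_adj h))
      (Finset.disjoint_left.1 hN (mem_union_of_matchingGraph_adj h.symm))

lemma isBipartiteWith_rewiring {A B : Finset V} (hG : G.IsBipartiteWith ↑A ↑B) (hUA : U ⊆ A)
    (hWB : W ⊆ B) : (G.rewiring U W φ).IsBipartiteWith ↑A ↑B := by
  have hAB : Disjoint A B := disjoint_coe.1 hG.disjoint
  have hNU : U.biUnion (G.neighborFinset ·) ⊆ B := biUnion_subset.2 fun u hu _ hx =>
    hG.mem_of_mem_adj (s := ↑A) (hUA hu) ((mem_neighborFinset ..).1 hx)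
  have hNW : W.biUnion (G.neighborFinset ·) ⊆ A := biUnion_subset.2 fun w hw _ hx =>
    hG.mem_of_mem_adj' (t := ↑B) (hWB hw) ((mem_neighborFinset ..).1 hx).symm
  refine ((hG.mono_left between_le).sup ((between_isBipartiteWith (disjoint_coe.2
    (hAB.mono hUA hWB))).of_subset ?_ ?_ hG.disjoint)).sup
    ((isBipartiteWith_matchingGraph (hAB.mono hNW hNU).symm φ).symm.of_subset ?_ ?_ hG.disjoint)
  all_goals assumption_mod_cast

theorem degree_rewiring (hUW : Disjoint U W) (hS : (G.power 3).IsIndepSet ↑(U ∪ W))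
    (hU : ∀ u ∈ U, G.degree u = #W) (hW : ∀ w ∈ W, G.degree w = #U) (v : V) :
    (G.rewiring U W φ).degree v = G.degree v := by
  have hNS := hS.disjoint_biUnion_neighborFinset (by norm_num)
  have hN := disjoint_biUnion_neighborFinset_of_isIndepSet (by norm_num) hUW hS
  have hDK :
      Disjoint (G.between (↑(U ∪ W))ᶜ (↑(U ∪ W))ᶜ) ((⊤ : SimpleGraph V).between ↑U ↑W) :=
    SimpleGraph.disjoint_left.2 fun x y hD hK => by
      simp only [between_adj, Set.mem_compl_iff, mem_coe, mem_union] at hD hK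
      tauto
  have hM : Disjoint
      (G.between (↑(U ∪ W))ᶜ (↑(U ∪ W))ᶜ ⊔ (⊤ : SimpleGraph V).between ↑U ↑W)
      (matchingGraph φ) := by
    refine SimpleGraph.disjoint_left.2 fun x y hDK hxy => ?_
    rcases hDK with hD | hK
    · obtain ⟨-, ⟨hx, rfl⟩ | ⟨hy, rfl⟩⟩ := matchingGraph_adj.1 hxy
      · exact not_adj_of_mem_biUnion_neighborFinset le_rfl hUW hS hx (φ ⟨x, hx⟩).2 hD.1
      · exact not_adj_of_mem_biUnion_neighborFinset le_rfl hUW hS hy (φ ⟨y, hy⟩).2 hD.1.symm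
    · have hxS : x ∈ U ∪ W := by
        simp only [between_adj, mem_coe] at hK
        rcases hK.2 with ⟨h, -⟩ | ⟨h, -⟩ <;> simp [h]
      refine Finset.disjoint_left.1 hNS ?_ hxS
      rw [union_biUnion]
      exact mem_union_of_matchingGraph_adj hxy
  rw [rewiring, degree_sup_of_disjoint hM, degree_sup_of_disjoint hDK, degree_matchingGraph hN,
    ← union_biUnion]
  by_cases hvS : v ∈ U ∪ W
  · rw [degree_between_compl_of_mem hvS, if_neg fun h => Finset.disjoint_left.1 hNS h hvS]
    rcases mem_union.1 hvS with hvU | hvW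
    · rw [degree_top_between hUW, if_pos hvU, hU v hvU, zero_add, add_zero]
    · rw [degree_top_between hUW, if_neg (Finset.disjoint_right.1 hUW hvW), if_pos hvW,
        hW v hvW, zero_add, add_zero]
  · rw [degree_between_compl_of_notMem hvS, degree_top_between hUW,
      if_neg fun h => hvS (mem_union_left _ h), if_neg fun h => hvS (mem_union_right _ h),
      ← hS.card_neighborFinset_inter (by norm_num), add_zero, card_sdiff_add_card_inter,
      card_neighborFinset_eq_degree]

end Rewiring

theorem exists_rewiring {A B U W : Finset V} (hG : G.IsBipartiteWith ↑A ↑B) (hUA : U ⊆ A)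
    (hWB : W ⊆ B) (hS : (G.power 3).IsIndepSet ↑(U ∪ W)) (hU : ∀ u ∈ U, G.degree u = #W)
    (hW : ∀ w ∈ W, G.degree w = #U) :
    ∃ H : SimpleGraph V, H.IsBipartiteWith ↑A ↑B ∧ (∀ v, H.degree v = G.degree v) ∧
      ∀ x y, H.Adj x y → (x ∈ U ∪ W ↔ y ∈ U ∪ W) := by
  have hUW : Disjoint U W := (disjoint_coe.1 hG.disjoint).mono hUA hWB
  have hSU : (G.power 3).IsIndepSet ↑U := hS.mono (coe_subset.2 subset_union_left)
  have hSW : (G.power 3).IsIndepSet ↑W := hS.mono (coe_subset.2 subset_union_right)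
  have hcard : #(U.biUnion (G.neighborFinset ·)) = #(W.biUnion (G.neighborFinset ·)) := by
    rw [hSU.card_biUnion_neighborFinset (by norm_num),
      hSW.card_biUnion_neighborFinset (by norm_num), sum_congr rfl hU, sum_congr rfl hW,
      sum_const, sum_const, smul_eq_mul, smul_eq_mul, mul_comm]
  let φ : U.biUnion (G.neighborFinset ·) ≃ W.biUnion (G.neighborFinset ·) :=
    Fintype.equivOfCardEq (by rwa [Fintype.card_coe, Fintype.card_coe])
  exact ⟨G.rewiring U W φ, isBipartiteWith_rewiring φ hG hUA hWB,
    degree_rewiring φ hUW hS hU hW, fun _ _ => mem_iff_of_rewiring_adj φ (by norm_num) hS⟩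

def HasSplitBipartiteRealization (G : SimpleGraph V) : Prop :=
  ∃ (H : SimpleGraph V) (s : Set V), H.Colorable 2 ∧ (∀ v, H.degree v = G.degree v) ∧
    (∀ x y, H.Adj x y → (x ∈ s ↔ y ∈ s)) ∧ s.Nonempty ∧ sᶜ.Nonempty

variable {k : ℕ}

lemma exists_degree_fiber_card_gt {A : Finset V} (hpos : ∀ v ∈ A, 0 < G.degree v)
    (hdeg : ∀ v, G.degree v ≤ k) {M : ℕ} (hA : k * M < #A) :
    ∃ d ∈ Icc 1 k, M < #{v ∈ A | G.degree v = d} := by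
  refine exists_lt_card_fiber_of_mul_lt_card_of_maps_to (fun v hv => ?_) (by simpa using hA)
  exact mem_Icc.2 ⟨hpos v hv, hdeg v⟩

theorem exists_scattered_biregular_pair (hdeg : ∀ v, G.degree v ≤ k) {A B : Finset V}
    (hApos : ∀ v ∈ A, 0 < G.degree v) (hBpos : ∀ v ∈ B, 0 < G.degree v)
    (hA : k * (2 * k * (k + 1) ^ 3) < #A) (hB : k * (2 * k * (k + 1) ^ 3) < #B) :
    ∃ U ⊆ A, ∃ W ⊆ B, U.Nonempty ∧ #U + #W ≤ 2 * k ∧ (∀ u ∈ U, G.degree u = #W) ∧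
      (∀ w ∈ W, G.degree w = #U) ∧ (G.power 3).IsIndepSet ↑(U ∪ W) := by
  obtain ⟨d, hd, hAd⟩ := exists_degree_fiber_card_gt hApos hdeg hA
  obtain ⟨e, he, hBe⟩ := exists_degree_fiber_card_gt hBpos hdeg hB
  rw [mem_Icc] at hd he
  have hpow : ∀ v, (G.power 3).degree v ≤ (k + 1) ^ 3 - 1 := fun v => by
    have := degree_power_lt hdeg v 3
    omega
  have hβ : (k + 1) ^ 3 - 1 + 1 = (k + 1) ^ 3 :=
    Nat.sub_add_cancel (Nat.one_le_pow _ _ k.succ_pos)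
  obtain ⟨U, hUA, hU, -, hUind⟩ :=
    exists_isIndepSet_union hpow {v ∈ A | G.degree v = d} e ∅ (by simp) (by
      rw [hβ, card_empty, zero_add]
      exact le_trans (by gcongr; omega) hAd.le)
  rw [empty_union] at hUind
  obtain ⟨W, hWB, hW, -, hind⟩ :=
    exists_isIndepSet_union hpow {v ∈ B | G.degree v = e} d U hUind (by
      rw [hβ, hU]
      exact le_trans (by gcongr; omega) hBe.le)
  refine ⟨U, hUA.trans (filter_subset _ _), W, hWB.trans (filter_subset _ _),
    card_pos.1 (by omega), by omega, fun u hu => ?_, fun w hw => ?_, hind⟩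
  · rw [hW, (mem_filter.1 (hUA hu)).2]
  · rw [hU, (mem_filter.1 (hWB hw)).2]

theorem hasSplitBipartiteRealization_of_forall_degree_pos (hcol : G.Colorable 2)
    (hdeg : ∀ v, G.degree v ≤ k) (hpos : ∀ v, 0 < G.degree v)
    (hV : 2 * (k + 1) ^ 6 < Fintype.card V) :
    G.HasSplitBipartiteRealization := by
  obtain ⟨A, hG⟩ := exists_isBipartiteWith_compl hcol
  -- Each colour class has at most `k` times as many vertices as the other, so both are larger
  -- than `k * (2 * k * (k + 1) ^ 3)`.
  have hV' : (k + 1) * (k * (2 * k * (k + 1) ^ 3)) < Fintype.card V :=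
    calc (k + 1) * (k * (2 * k * (k + 1) ^ 3)) = 2 * (k * k) * (k + 1) ^ 4 := by ring
      _ ≤ 2 * ((k + 1) * (k + 1)) * (k + 1) ^ 4 := by gcongr <;> omega
      _ = 2 * (k + 1) ^ 6 := by ring
      _ < Fintype.card V := hV
  have hcard := card_add_card_compl A
  have hA := card_le_mul_card_of_isBipartiteWith hG.symm (fun v _ => hpos v) fun v _ => hdeg v
  have hAc := card_le_mul_card_of_isBipartiteWith hG (fun v _ => hpos v) fun v _ => hdeg v
  obtain ⟨U, hUA, W, hWB, hU, hUW, hUdeg, hWdeg, hind⟩ :=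
    exists_scattered_biregular_pair (A := A) (B := Aᶜ) hdeg (fun v _ => hpos v)
      (fun v _ => hpos v)
      (Nat.lt_of_mul_lt_mul_left (a := k + 1) (by nlinarith))
      (Nat.lt_of_mul_lt_mul_left (a := k + 1) (by nlinarith))
  obtain ⟨H, hH, hHdeg, hHadj⟩ := exists_rewiring hG hUA hWB hind hUdeg hWdeg
  obtain ⟨v, -, hv⟩ := exists_mem_notMem_of_card_lt_card (s := U ∪ W) (t := univ) (by
    have := card_union_le U W
    have := Nat.le_self_pow (n := 6) (by norm_num) (k + 1)
    rw [card_univ]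
    omega)
  exact ⟨H, ↑(U ∪ W), hH.isBipartite, hHdeg, fun x y h => by simpa using hHadj x y h,
    coe_nonempty.2 (hU.mono subset_union_left), ⟨v, by simpa using hv⟩⟩

theorem hasSplitBipartiteRealization_of_degree_eq_zero (hcol : G.Colorable 2) {v : V}
    (hv : G.degree v = 0) (hV : 1 < Fintype.card V) :
    G.HasSplitBipartiteRealization := by
  have hiso : ∀ w, ¬G.Adj v w := fun w h =>
    (G.degree_eq_zero_iff_notMem_support v).1 hv ⟨w, h⟩
  obtain ⟨w, hw⟩ := Fintype.exists_ne_of_one_lt_card hV v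
  refine ⟨G, {v}, hcol, fun _ => rfl, fun x y h => ?_, ⟨v, rfl⟩, ⟨w, hw⟩⟩
  simp only [Set.mem_singleton_iff]
  constructor <;> rintro rfl
  exacts [absurd h (hiso y), absurd h.symm (hiso x)]

theorem hasSplitBipartiteRealization_of_lt_card (hcol : G.Colorable 2)
    (hdeg : ∀ v, G.degree v ≤ k) (hV : 2 * (k + 1) ^ 6 < Fintype.card V) :
    G.HasSplitBipartiteRealization := by
  by_cases h : ∃ v, G.degree v = 0
  · obtain ⟨v, hv⟩ := h
    have := Nat.one_le_pow 6 (k + 1) k.succ_pos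
    exact hasSplitBipartiteRealization_of_degree_eq_zero hcol hv (by omega)
  · simp only [not_exists] at h
    exact hasSplitBipartiteRealization_of_forall_degree_pos hcol hdeg
      (fun v => Nat.pos_of_ne_zero (h v)) hV

end SimpleGraph

theorem unionRealizable_bipartiteGraphsUpTo {k : ℕ} {V : Type} [Fintype V] (G : SimpleGraph V)
    (hcol : G.Colorable 2) (hdeg : ∀ v, G.degree v ≤ k) :
    UnionRealizable (bipartiteGraphsUpTo (2 * (k + 1) ^ 6)) (degMultiset G) := by
  induction hn : Fintype.card V using Nat.strong_induction_on generalizing V with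
  | _ n ih =>
    by_cases hsmall : n ≤ 2 * (k + 1) ^ 6
    · exact UnionRealizable.of_mem G (mem_bipartiteGraphsUpTo.2
        ⟨hn ▸ hsmall, hcol.of_hom (G.overFinIso rfl).symm.toEmbedding.toHom⟩)
    obtain ⟨H, s, hHcol, hHdeg, hs, ⟨v, hv⟩, ⟨w, hw⟩⟩ :=
      hasSplitBipartiteRealization_of_lt_card hcol hdeg (by omega)
    have piece : ∀ (t : Set V) [Fintype t] (x : V), x ∉ t →
        (∀ u ∈ t, H.neighborSet u ⊆ t) →
        UnionRealizable (bipartiteGraphsUpTo (2 * (k + 1) ^ 6)) (degMultiset (H.induce t)) :=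
      fun t _ x hx ht => by
        refine ih _ (hn ▸ Fintype.card_subtype_lt hx) (H.induce t)
          (hHcol.of_hom (Embedding.induce t).toHom) (fun u => ?_) rfl
        convert (hHdeg u).trans_le (hdeg u) using 1
        convert degree_induce_of_neighborSet_subset (ht u u.2)
    rw [degMultiset_congr fun v => (hHdeg v).symm, degMultiset_eq_add_induce_compl hs]
    exact (piece s w hw fun u hu x hx => (hs u x hx).1 hu).add
      (piece sᶜ v (by simpa using hv) fun u hu x hx => mt (hs u x hx).2 hu)

/-- **Robertson's bipartite question, fixed finite set form (Corollary 1).**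
For every `k` there is a finite family `Z` of finite simple bipartite graphs
such that the degree multiset of every finite simple bipartite (2-colorable)
graph with maximum degree at most `k` is the sum of the degree multisets of
some finite multiset of members of `Z`; i.e. every bipartite degree sequence
with degrees at most `k` is realized by a disjoint union of bipartite graphs
from the fixed finite set `Z`. -/
theorem bipartite_bounded_degree_realized_from_fixed_finite_set (k : ℕ) :
    ∃ Z : List (Σ n : ℕ, SimpleGraph (Fin n)),
      (∀ p ∈ Z, p.2.Colorable 2) ∧
      ∀ (V : Type) [Fintype V] (G : SimpleGraph V),
        G.Colorable 2 →
        (∀ v : V, G.degree v ≤ k) →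
        ∃ m : Multiset (Σ n : ℕ, SimpleGraph (Fin n)),
          (∀ p ∈ m, p ∈ Z) ∧
          degMultiset G = (m.map fun p => degMultiset p.2).sum := by
  refine ⟨bipartiteGraphsUpTo (2 * (k + 1) ^ 6), fun p hp => (mem_bipartiteGraphsUpTo.1 hp).2,
    fun V _ G hcol hdeg => ?_⟩
  exact unionRealizable_bipartiteGraphsUpTo G hcol hdeg
end

section
/- Fix a natural number k. For every infinite sequence G₀, G₁, G₂, … of finite simple graphs, each with maximum degree at most k, there exist indices i < j and finite simple graphs H and H' such that the degree multiset of H equals the degree multiset of G i, the degree multiset of H' equals the degree multiset of G j, and there is an induced-subgraph embedding of H into H' (a graph embedding f with f(u) adjacent to f(v) in H' if and only if u is adjacent to v in H). In other words, degree sequences of finite graphs with degrees at most k are well quasi ordered by the Rao relation ⪯. -/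
/-!
Encode a degree multiset with all degrees at most `k` by its counts `c(0), …, c(k)`. Dickson's
lemma, refined by pigeonholing the residues modulo `(k + 1)!`, yields `i < j` with
`cᵢ(d) ≤ cⱼ(d)` and `cᵢ(d) ≡ cⱼ(d) [MOD (k + 1)!]` for every `d ≤ k`. Then `d + 1` divides
`cⱼ(d) - cᵢ(d)`, so these extra degrees are realized by disjoint copies of `K_{d+1}`; adding them
to `G i` as new components gives a graph with the degree multiset of `G j` in which `G i` is an
induced subgraph.
-/

open scoped Classical

theorem Nat.wellQuasiOrdered_le_and_modEq {ι : Type*} [Finite ι] {M : ℕ} (hM : M ≠ 0) :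
    WellQuasiOrdered fun a b : ι → ℕ => ∀ i, a i ≤ b i ∧ a i ≡ b i [MOD M] := by
  have : NeZero M := ⟨hM⟩
  intro f
  obtain ⟨m, n, hmn, hres, hle⟩ :=
    (Finite.wellQuasiOrdered (α := ι → ZMod M) (· = ·)).prod wellQuasiOrdered_le
      fun t => ((fun i => (f t i : ZMod M)), f t)
  exact ⟨m, n, hmn, fun i => ⟨hle i, (ZMod.natCast_eq_natCast_iff _ _ _).mp (congrFun hres i)⟩⟩

namespace SimpleGraph
variable {V W : Type*} {G : SimpleGraph V} {H : SimpleGraph W}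

theorem neighborFinset_sum_inl (v : V) [Fintype (G.neighborSet v)]
    [Fintype ((G ⊕g H).neighborSet (.inl v))] :
    (G ⊕g H).neighborFinset (.inl v) = (G.neighborFinset v).map .inl := by
  ext (w | w) <;> simp

theorem neighborFinset_sum_inr (w : W) [Fintype (H.neighborSet w)]
    [Fintype ((G ⊕g H).neighborSet (.inr w))] :
    (G ⊕g H).neighborFinset (.inr w) = (H.neighborFinset w).map .inr := by
  ext (v | v) <;> simp

theorem degree_sum_inl (v : V) [Fintype (G.neighborSet v)]
    [Fintype ((G ⊕g H).neighborSet (.inl v))] : (G ⊕g H).degree (.inl v) = G.degree v := by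
  rw [degree, degree, neighborFinset_sum_inl, Finset.card_map]

theorem degree_sum_inr (w : W) [Fintype (H.neighborSet w)]
    [Fintype ((G ⊕g H).neighborSet (.inr w))] : (G ⊕g H).degree (.inr w) = H.degree w := by
  rw [degree, degree, neighborFinset_sum_inr, Finset.card_map]

theorem isRegularOfDegree_bot_boxProd_top (c d : ℕ) :
    ((⊥ : SimpleGraph (Fin c)) □ (⊤ : SimpleGraph (Fin (d + 1)))).IsRegularOfDegree d := by
  intro x
  rw [degree_boxProd]
  simp

end SimpleGraph

open SimpleGraph

section degMultiset

variable {V W : Type} [Fintype V] [Fintype W]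

theorem degMultiset_sum (G : SimpleGraph V) (H : SimpleGraph W) :
    degMultiset (G ⊕g H) = degMultiset G + degMultiset H := by
  simp only [degMultiset, ← Finset.univ_disjSum_univ, Finset.val_disjSum, Multiset.map_disjSum,
    degree_sum_inl, degree_sum_inr]

theorem degMultiset_congr_s6 {G : SimpleGraph V} {H : SimpleGraph W} (e : G ≃g H) :
    degMultiset G = degMultiset H := by
  rw [degMultiset, degMultiset, ← Finset.map_univ_equiv e.toEquiv, Finset.map_val,
    Multiset.map_map]
  exact Multiset.map_congr rfl fun v _ => (e.degree_eq v).symm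

theorem SimpleGraph.IsRegularOfDegree.degMultiset_eq {G : SimpleGraph V} [G.LocallyFinite]
    {d : ℕ} (h : G.IsRegularOfDegree d) :
    degMultiset G = Multiset.replicate (Fintype.card V) d := by
  refine Multiset.eq_replicate.mpr ⟨by simp [degMultiset], ?_⟩
  simp only [degMultiset, Multiset.mem_map]
  rintro _ ⟨v, -, rfl⟩
  convert h.degree_eq v

theorem forall_mem_degMultiset_le_iff {G : SimpleGraph V} {k : ℕ} :
    (∀ n ∈ degMultiset G, n ≤ k) ↔ ∀ v, G.degree v ≤ k := by
  simp [degMultiset]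

end degMultiset

def IsGraphic (D : Multiset ℕ) : Prop :=
  ∃ (V : Type) (_ : Fintype V) (G : SimpleGraph V), degMultiset G = D

namespace IsGraphic

theorem zero : IsGraphic 0 :=
  ⟨Empty, inferInstance, ⊥, rfl⟩

theorem add {D₁ D₂ : Multiset ℕ} (h₁ : IsGraphic D₁) (h₂ : IsGraphic D₂) : IsGraphic (D₁ + D₂) := by
  obtain ⟨V, _, G, rfl⟩ := h₁
  obtain ⟨W, _, H, rfl⟩ := h₂
  exact ⟨V ⊕ W, inferInstance, G ⊕g H, degMultiset_sum G H⟩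

theorem replicate {m d : ℕ} (h : d + 1 ∣ m) : IsGraphic (Multiset.replicate m d) := by
  obtain ⟨c, rfl⟩ := h
  refine ⟨_, _, _, (isRegularOfDegree_bot_boxProd_top c d).degMultiset_eq.trans ?_⟩
  rw [Fintype.card_prod, Fintype.card_fin, Fintype.card_fin, mul_comm]

theorem of_forall_dvd_count {D : Multiset ℕ} (h : ∀ d, d + 1 ∣ D.count d) : IsGraphic D := by
  rw [← Multiset.toFinset_sum_count_nsmul_eq D]
  exact Finset.sum_induction _ IsGraphic (fun _ _ => add) zero fun d _ => by
    rw [Multiset.nsmul_singleton]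
    exact replicate (h d)

theorem of_count_modEq {D₁ D₂ : Multiset ℕ} {k : ℕ} (hD₂ : ∀ n ∈ D₂, n ≤ k)
    (h : ∀ d ≤ k, D₁.count d ≡ D₂.count d [MOD (k + 1).factorial]) : IsGraphic (D₂ - D₁) := by
  refine of_forall_dvd_count fun d => ?_
  rw [Multiset.count_sub]
  by_cases hd : d ≤ k
  · exact (Nat.dvd_factorial d.succ_pos (by omega)).trans
      (Nat.dvd_of_mod_eq_zero (Nat.sub_mod_eq_zero_of_mod_eq (h d hd).symm))
  · rw [Multiset.count_eq_zero_of_notMem fun hmem => hd (hD₂ d hmem), Nat.zero_sub]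
    exact dvd_zero _

theorem exists_fin_embedding {V : Type} [Fintype V] {G : SimpleGraph V} {D : Multiset ℕ}
    (hle : degMultiset G ≤ D) (h : IsGraphic (D - degMultiset G)) :
    ∃ (b : ℕ) (H : SimpleGraph (Fin b)), degMultiset H = D ∧ Nonempty (G ↪g H) := by
  obtain ⟨W, _, R, hR⟩ := h
  let e := Iso.map (Fintype.equivFin (V ⊕ W)) (G ⊕g R)
  refine ⟨_, _, ?_, ⟨e.toEmbedding.comp Embedding.sumInl⟩⟩
  rw [← degMultiset_congr_s6 e, degMultiset_sum, hR, add_tsub_cancel_of_le hle]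

end IsGraphic

theorem Multiset.le_of_forall_count_le {D₁ D₂ : Multiset ℕ} {k : ℕ} (hD₁ : ∀ n ∈ D₁, n ≤ k)
    (h : ∀ d ≤ k, D₁.count d ≤ D₂.count d) : D₁ ≤ D₂ := by
  refine Multiset.le_iff_count.mpr fun d => ?_
  by_cases hd : d ≤ k
  · exact h d hd
  · rw [Multiset.count_eq_zero_of_notMem fun hmem => hd (hD₁ d hmem)]
    exact Nat.zero_le _

/-- **Bounded degree case of Rao's Conjecture.**
Degree sequences of finite graphs with all degrees at most `k` are well quasi
ordered by the Rao relation `⪯`: in every infinite sequence `G₀, G₁, …` of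
finite simple graphs of maximum degree at most `k` there are indices `i < j`
and graphs `H`, `H'` realizing the degree sequences of `G i` and `G j`
respectively such that `H` embeds into `H'` as an induced subgraph. -/
theorem rao_conjecture_bounded_degree (k : ℕ)
    (G : ℕ → Σ n : ℕ, SimpleGraph (Fin n))
    (hdeg : ∀ i : ℕ, ∀ v : Fin (G i).1, (G i).2.degree v ≤ k) :
    ∃ i j : ℕ, i < j ∧
      ∃ (a b : ℕ) (H : SimpleGraph (Fin a)) (H' : SimpleGraph (Fin b)),
        degMultiset H = degMultiset (G i).2 ∧
        degMultiset H' = degMultiset (G j).2 ∧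
        Nonempty (H ↪g H') := by
  have hbound i : ∀ n ∈ degMultiset (G i).2, n ≤ k := forall_mem_degMultiset_le_iff.mpr (hdeg i)
  obtain ⟨i, j, hij, hcount⟩ := Nat.wellQuasiOrdered_le_and_modEq (k + 1).factorial_ne_zero
    fun i (d : Fin (k + 1)) => (degMultiset (G i).2).count (d : ℕ)
  have hle := Multiset.le_of_forall_count_le (hbound i) fun d hd => (hcount ⟨d, by omega⟩).1
  have hgraphic := IsGraphic.of_count_modEq (hbound j) fun d hd => (hcount ⟨d, by omega⟩).2
  obtain ⟨b, H', hH', hemb⟩ := IsGraphic.exists_fin_embedding hle hgraphic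
  exact ⟨i, j, hij, _, b, (G i).2, H', rfl, hH', hemb⟩
end
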